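/- Let B be a skew brace such that the design group G(B) = (B,+) ⋊_λ (B,∘) is nilpotent of class c. Then B is strongly left nilpotent: setting I_n = Z_n(G(B)) ∩ (B,+) (intersection of the n-th term of the upper central series of G(B) with the additive group embedded as {(b,0)}), each I_n is a strong left ideal of B, B ∗ I_{n+1} ⊆ I_n, and I_c = B. In particular (B,+) is nilpotent. -/

import Mathlib

/-- A skew (left) brace: a type with an additive group structure `(B,+)` and a
multiplicative group structure `(B,∘)` (written `*`), satisfying the skew left
distributive law `a ∘ (b + c) = a ∘ b − a + a ∘ c`.  Addition is not assumed
commutative. -/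
class SkewBrace (B : Type*) extends AddGroup B, Group B where
  skew_mul_add : ∀ a b c : B, a * (b + c) = a * b + -a + a * c

namespace SkewBrace

variable {B : Type*} [SkewBrace B]

/-- `lam a x = −a + a ∘ x`, the lambda map of a skew brace. -/
def lam (a x : B) : B := -a + a * x

/-- The star operation `a ∗ b = λ_a(b) − b = −a + a ∘ b − b`. -/
def sstar (a b : B) : B := -a + a * b + -b

/-- A sub-skew-brace: a subset closed under both group operations and inverses. -/
def IsSubSkewBrace (C : Set B) : Prop :=
  (0 : B) ∈ C ∧ (∀ a ∈ C, ∀ b ∈ C, a + b ∈ C) ∧ (∀ a ∈ C, -a ∈ C) ∧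
    (∀ a ∈ C, ∀ b ∈ C, a * b ∈ C) ∧ (∀ a ∈ C, a⁻¹ ∈ C)

/-- A subgroup of the additive group `(B,+)`, as a subset. -/
def IsAddSubgroup (S : Set B) : Prop :=
  (0 : B) ∈ S ∧ (∀ a ∈ S, ∀ b ∈ S, a + b ∈ S) ∧ (∀ a ∈ S, -a ∈ S)

/-- A subgroup of the multiplicative group `(B,∘)`, as a subset. -/
def IsMulSubgroup (S : Set B) : Prop :=
  (1 : B) ∈ S ∧ (∀ a ∈ S, ∀ b ∈ S, a * b ∈ S) ∧ (∀ a ∈ S, a⁻¹ ∈ S)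

/-- A strong left ideal: an additively normal, `λ`-invariant additive subgroup. -/
def IsStrongLeftIdeal (J : Set B) : Prop :=
  IsAddSubgroup J ∧ (∀ b : B, ∀ j ∈ J, b + j + -b ∈ J) ∧ (∀ b : B, ∀ j ∈ J, lam b j ∈ J)

/-- An ideal: a sub-skew-brace which is additively normal, `λ`-invariant and
multiplicatively normal. -/
def IsIdeal (I : Set B) : Prop :=
  IsSubSkewBrace I ∧ (∀ b : B, ∀ a ∈ I, b + a + -b ∈ I) ∧
    (∀ b : B, ∀ a ∈ I, lam b a ∈ I) ∧ (∀ b : B, ∀ a ∈ I, b * a * b⁻¹ ∈ I)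

/-- Multiplication of the design group `G(B) = (B,+) ⋊_λ (B,∘)`. -/
def gmul (p q : B × B) : B × B := (p.1 + lam p.2 q.1, p.2 * q.2)

/-- Inversion in the design group `G(B)`. -/
def ginv (p : B × B) : B × B := (-(lam p.2⁻¹ p.1), p.2⁻¹)

/-- For a subset `I ⊆ B`, the subset `G(I) = I × I` of the design group. -/
def designSet (I : Set B) : Set (B × B) := {p | p.1 ∈ I ∧ p.2 ∈ I}

/-- Commutator `[p,q] = p q p⁻¹ q⁻¹` in the design group. -/
def gcomm (p q : B × B) : B × B := gmul (gmul (gmul p q) (ginv p)) (ginv q)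

/-- The upper central series of the design group `G(B)`, as sets. -/
def zSeqG (B : Type*) [SkewBrace B] : ℕ → Set (B × B)
  | 0 => {((0 : B), (1 : B))}
  | n + 1 => {p : B × B | ∀ q : B × B, gcomm p q ∈ zSeqG B n}

/-- `I_n = Z_n(G(B)) ∩ (B,+)`, with `(B,+)` embedded as `{(b, 1)}` in `G(B)`. -/
def zAddPart (B : Type*) [SkewBrace B] (n : ℕ) : Set B :=
  {b : B | ((b, (1 : B)) : B × B) ∈ zSeqG B n}


/-! ### Auxiliary lemmas -/

lemma mul_zero' (a : B) : a * 0 = a := by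
  have h : a * ((0:B) + 0) = a * 0 + -a + a * 0 := skew_mul_add a 0 0
  rw [add_zero] at h
  have h2 : -(a*0) + (a*0) = -(a*0) + (a*0 + -a + a*0) := by rw [← h]
  rw [neg_add_cancel, add_assoc, neg_add_cancel_left] at h2
  have h3 : a + (-a + a*0) = a + 0 := by rw [← h2]
  rwa [add_neg_cancel_left, add_zero] at h3

lemma one_eq_zero : (1 : B) = 0 := by
  have h := mul_zero' (1 : B)
  rw [one_mul] at h
  exact h.symm

lemma lam_add (a b c : B) : lam a (b + c) = lam a b + lam a c := by
  simp [lam, skew_mul_add, add_assoc]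

lemma lam_zero (a : B) : lam a 0 = 0 := by
  simp [lam, mul_zero']

lemma lam_one_left (c : B) : lam 1 c = c := by
  rw [lam, one_mul, one_eq_zero, neg_zero, zero_add]

lemma mul_neg' (a b : B) : a * (-b) = a + -(a*b) + a := by
  have h : a * (b + -b) = a * b + -a + a * (-b) := skew_mul_add a b (-b)
  rw [add_neg_cancel, mul_zero'] at h
  have h2 : -(a*b + -a) + a = -(a*b + -a) + (a*b + -a + a*(-b)) := by rw [← h]
  rw [neg_add_cancel_left, neg_add_rev, neg_neg] at h2
  exact h2.symm

lemma lam_mul (a b c : B) : lam (a * b) c = lam a (lam b c) := by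
  simp only [lam, skew_mul_add, mul_neg', mul_assoc]
  simp [add_assoc]

/-- The design group as a type synonym carrying the group structure `gmul`. -/
def GB (B : Type*) [SkewBrace B] : Type _ := B × B

instance : Group (GB B) where
  mul := gmul
  one := ((0 : B), (1 : B))
  inv := ginv
  mul_assoc p q r := by
    show gmul (gmul p q) r = gmul p (gmul q r)
    simp [gmul, lam_add, lam_mul, add_assoc, mul_assoc, Prod.ext_iff]
  one_mul p := by
    show gmul ((0 : B), (1 : B)) p = p
    simp [gmul, lam_one_left, Prod.ext_iff]
    rfl
  mul_one p := by
    show gmul p ((0 : B), (1 : B)) = p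
    simp [gmul, lam_zero, Prod.ext_iff]
    rfl
  inv_mul_cancel p := by
    show gmul (ginv p) p = ((0 : B), (1 : B))
    simp [gmul, ginv, Prod.ext_iff]

lemma gmul_def (p q : GB B) : p * q = gmul p q := rfl
lemma ginv_def (p : GB B) : p⁻¹ = ginv p := rfl
lemma gone_def : (1 : GB B) = ((0 : B), (1 : B)) := rfl
lemma gcomm_def (p q : GB B) : p * q * p⁻¹ * q⁻¹ = gcomm p q := rfl

lemma zSeq_eq (n : ℕ) :
    zSeqG B n = ((Subgroup.upperCentralSeries (GB B) n : Subgroup (GB B)) : Set (GB B)) := by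
  induction n with
  | zero =>
    ext p
    rw [Subgroup.upperCentralSeries_zero]
    constructor
    · intro hp
      have : p = ((0 : B), (1 : B)) := hp
      exact this ▸ (Subgroup.one_mem _ : (1 : GB B) ∈ (⊥ : Subgroup (GB B)))
    · intro hp
      have : (show GB B from p) = 1 := Subgroup.mem_bot.mp hp
      exact this
  | succ n ih =>
    ext p
    constructor
    · intro hp
      have hp' : ∀ q : B × B, gcomm p q ∈ zSeqG B n := hp
      have h3 : (show GB B from p) ∈ Subgroup.upperCentralSeries (GB B) (n+1) := by
        refine Subgroup.mem_upperCentralSeries_succ_iff.mpr fun q => ?_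
        have := hp' q
        rw [ih] at this
        exact this
      exact h3
    · intro hp
      have hp' : (show GB B from p) ∈ Subgroup.upperCentralSeries (GB B) (n+1) := hp
      show ∀ q : B × B, gcomm p q ∈ zSeqG B n
      intro q
      have h2 := Subgroup.mem_upperCentralSeries_succ_iff.mp hp' (show GB B from q)
      rw [ih]
      exact (gcomm_def (show GB B from p) (show GB B from q)) ▸ h2

lemma mem_zSeq_iff (n : ℕ) (p : B × B) :
    p ∈ zSeqG B n ↔ (show GB B from p) ∈ Subgroup.upperCentralSeries (GB B) n := by
  rw [zSeq_eq]; exact Iff.rfl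

lemma emb_mul (a b : B) :
    (show GB B from (a + b, (1:B))) = (show GB B from (a, (1:B))) * (show GB B from (b, (1:B))) := by
  rw [gmul_def]; simp [gmul, lam_one_left]
  rfl

lemma emb_inv (a : B) :
    (show GB B from (-a, (1:B))) = (show GB B from (a, (1:B)))⁻¹ := by
  rw [ginv_def]; simp [ginv, lam_one_left]
  rfl

lemma emb_conj (b j : B) :
    (show GB B from (b + j + -b, (1:B))) =
      (show GB B from (b, (1:B))) * (show GB B from (j, (1:B))) * (show GB B from (b, (1:B)))⁻¹ := by
  rw [emb_mul, emb_mul, emb_inv, mul_assoc]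

lemma lam_conj (b j : B) :
    (show GB B from (lam b j, (1:B))) =
      (show GB B from ((0:B), b)) * (show GB B from (j, (1:B))) * (show GB B from ((0:B), b))⁻¹ := by
  rw [gmul_def, gmul_def, ginv_def]
  simp [gmul, ginv, lam_zero, lam_one_left, Prod.ext_iff]
  rfl

lemma sstar_comm (b a : B) :
    (show GB B from (sstar b a, (1:B))) =
      ((show GB B from (a, (1:B))) * (show GB B from ((0:B), b)) *
        (show GB B from (a, (1:B)))⁻¹ * (show GB B from ((0:B), b))⁻¹)⁻¹ := by
  have key : ∀ x y : GB B, (x * y * x⁻¹ * y⁻¹)⁻¹ = y * x * y⁻¹ * x⁻¹ := by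
    intro x y; group
  rw [key]
  rw [gmul_def, gmul_def, gmul_def, ginv_def, ginv_def]
  have e1 : gmul ((0:B), b) (a, 1) = (lam b a, b) := by simp [gmul]
  have e2 : ginv ((0:B), b) = ((0:B), b⁻¹) := by simp [ginv, lam_zero]
  have e3 : ginv ((a : B), (1:B)) = (-a, (1:B)) := by simp [ginv, lam_one_left]
  have e4 : gmul (lam b a, b) ((0:B), b⁻¹) = (lam b a, (1:B)) := by simp [gmul, lam_zero]
  have e5 : gmul (lam b a, (1:B)) (-a, (1:B)) = (lam b a + -a, (1:B)) := by
    simp [gmul, lam_one_left]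
  have h1 : sstar b a = lam b a + -a := rfl
  show ((sstar b a, (1:B)) : B × B) = gmul (gmul (gmul ((0:B), b) (a, 1)) (ginv ((0:B), b))) (ginv ((a:B), (1:B)))
  rw [e1, e2, e3, e4, e5, h1]

/-- If the design group `G(B)` is nilpotent of class `c`, then each
`I_n = Z_n(G(B)) ∩ (B,+)` is a strong left ideal, `B ∗ I_{n+1} ⊆ I_n`, and
`I_c = B`; in particular `B` is strongly left nilpotent and `(B,+)` is
nilpotent. -/
theorem strongly_left_nilpotent_of_design_nilpotent (c : ℕ)
    (hnil : zSeqG B c = (Set.univ : Set (B × B))) :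
    (∀ n : ℕ, IsStrongLeftIdeal (zAddPart B n)) ∧
    (∀ n : ℕ, ∀ b : B, ∀ a ∈ zAddPart B (n + 1), sstar b a ∈ zAddPart B n) ∧
    zAddPart B c = Set.univ ∧
    Group.IsNilpotent (Multiplicative B) := by
  have hmem : ∀ (n : ℕ) (a : B), a ∈ zAddPart B n ↔
      (show GB B from (a, (1:B))) ∈ Subgroup.upperCentralSeries (GB B) n := by
    intro n a
    exact mem_zSeq_iff n (a, (1:B))
  have hnorm : ∀ n : ℕ, (Subgroup.upperCentralSeries (GB B) n).Normal :=
    fun n => inferInstance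
  refine ⟨?_, ?_, ?_, ?_⟩
  · intro n
    refine ⟨⟨?_, ?_, ?_⟩, ?_, ?_⟩
    · rw [hmem]
      exact (Subgroup.one_mem _ : (1 : GB B) ∈ _)
    · intro a ha b hb
      rw [hmem] at ha hb ⊢
      rw [emb_mul]
      exact Subgroup.mul_mem _ ha hb
    · intro a ha
      rw [hmem] at ha ⊢
      rw [emb_inv]
      exact Subgroup.inv_mem _ ha
    · intro b j hj
      rw [hmem] at hj ⊢
      rw [emb_conj]
      exact (hnorm n).conj_mem _ hj _
    · intro b j hj
      rw [hmem] at hj ⊢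
      rw [lam_conj]
      exact (hnorm n).conj_mem _ hj _
  · intro n b a ha
    have h1 : gcomm ((a : B), (1:B)) (((0:B), b)) ∈ zSeqG B n := ha (((0:B), b))
    rw [mem_zSeq_iff] at h1
    change (show GB B from ((a:B),(1:B))) * (show GB B from ((0:B), b)) * (show GB B from ((a:B),(1:B)))⁻¹ * (show GB B from ((0:B), b))⁻¹ ∈ Subgroup.upperCentralSeries (GB B) n at h1
    rw [hmem]
    rw [sstar_comm]
    exact Subgroup.inv_mem _ h1
  · apply Set.eq_univ_of_forall
    intro b
    show ((b, (1:B)) : B × B) ∈ zSeqG B c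
    rw [hnil]
    trivial
  · have htop : Subgroup.upperCentralSeries (GB B) c = ⊤ := by
      rw [Subgroup.eq_top_iff']
      intro p
      have : (show B × B from p) ∈ zSeqG B c := by rw [hnil]; trivial
      exact (mem_zSeq_iff c _).mp this
    haveI hnilG : Group.IsNilpotent (GB B) := ⟨⟨c, htop⟩⟩
    let φ : Multiplicative B →* GB B :=
      { toFun := fun b => (show GB B from (Multiplicative.toAdd b, (1:B)))
        map_one' := rfl
        map_mul' := fun x y => by
          show (show GB B from (Multiplicative.toAdd x + Multiplicative.toAdd y, (1:B))) = _
          rw [emb_mul] }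
    have hker : φ.ker ≤ Subgroup.center (Multiplicative B) := by
      intro x hx
      have : (show GB B from (Multiplicative.toAdd x, (1:B))) = (1 : GB B) := hx
      have hx0 : Multiplicative.toAdd x = 0 := congrArg Prod.fst this
      have : x = 1 := hx0
      rw [this]
      exact Subgroup.one_mem _
    exact isNilpotent_of_ker_le_center φ hker



end SkewBrace
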